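/- If a sequence (ν_k) of finite Borel measures on T² converges weakly to a finite Borel measure ν_∞ (i.e. ∫φ dν_k → ∫φ dν_∞ for every continuous function φ on T²), then for every ρ>0 one has ‖ν_∞‖_ρ = lim_{k→∞} ‖ν_k‖_ρ. -/

import Mathlib

open MeasureTheory Metric Filter Topology
open scoped ENNReal

/-- The flat two-torus `ℝ²/ℤ²`, realized as the `L²`-product of two circles of length one. -/
abbrev T2 : Type := PiLp 2 fun _ : Fin 2 => AddCircle (1 : ℝ)

noncomputable instance : MeasurableSpace T2 := borel T2
instance : BorelSpace T2 := ⟨rfl⟩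
instance : CompactSpace T2 :=
  (PiLp.homeomorph 2 fun _ : Fin 2 => AddCircle (1 : ℝ)).symm.compactSpace

/-- The condition `C₀⁻¹ ≤ dm/dLeb ≤ C₀` for the smooth measure `m` in terms of the Haar
probability measure `Leb`. -/
def DensityBounds (C₀ : ℝ) (Leb m : Measure T2) : Prop :=
  ∀ s : Set T2, MeasurableSet s →
    ENNReal.ofReal C₀⁻¹ * Leb s ≤ m s ∧ m s ≤ ENNReal.ofReal C₀ * Leb s

/-- The `ρ`-inner product `⟨ν,ν'⟩_ρ = ρ⁻⁴ ∫ ν(B(z,ρ)) ν'(B(z,ρ)) dm(z)`. -/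
noncomputable def rinner (m ν ν' : Measure T2) (ρ : ℝ) : ℝ :=
  (1 / ρ ^ 4) * ∫ z, (ν (ball z ρ)).toReal * (ν' (ball z ρ)).toReal ∂m

/-- The `ρ`-semi-norm `‖ν‖_ρ = ⟨ν,ν⟩_ρ^{1/2}`. -/
noncomputable def rnorm (m ν : Measure T2) (ρ : ℝ) : ℝ :=
  Real.sqrt (rinner m ν ν ρ)

/-!
If the limit `ν_∞` does not charge the sphere `∂B(z,ρ)`, the portmanteau theorem gives
`ν_k(B(z,ρ)) → ν_∞(B(z,ρ))`. Spheres are null for the Haar measure of `T²` (by Fubini: each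
horizontal slice of a sphere lies in a sphere of the circle), hence `m`-null, and so, by Fubini
again, `ν_∞(∂B(z,ρ)) = 0` for `m`-almost every `z`. The ball masses are bounded by the total
masses, which converge, so dominated convergence yields convergence of `‖ν_k‖_ρ²`.
-/

theorem AddCircle.volume_sphere {T : ℝ} [Fact (0 < T)] (x : AddCircle T) (ε : ℝ) :
    volume (sphere x ε) = 0 := by
  rw [← closedBall_sdiff_ball]
  exact (ae_eq_set.1 AddCircle.closedBall_ae_eq_ball).1

namespace MeasureTheory

theorem FiniteMeasure.tendsto_measure_of_null_frontier_of_tendsto {Ω ι : Type*} {L : Filter ι}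
    [MeasurableSpace Ω] [TopologicalSpace Ω] [OpensMeasurableSpace Ω] [HasOuterApproxClosed Ω]
    {μ : FiniteMeasure Ω} {μs : ι → FiniteMeasure Ω} (μs_lim : Tendsto μs L (𝓝 μ))
    {E : Set Ω} (E_nullbdry : μ (frontier E) = 0) :
    Tendsto (fun i ↦ μs i E) L (𝓝 (μ E)) := by
  rcases isEmpty_or_nonempty Ω with _ | _
  · simpa [Set.eq_empty_of_isEmpty E, FiniteMeasure.coeFn_def] using tendsto_const_nhds
  rcases eq_or_ne μ 0 with rfl | hμ
  · have hmass := μs_lim.mass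
    rw [FiniteMeasure.zero_mass] at hmass
    exact tendsto_of_tendsto_of_tendsto_of_le_of_le tendsto_const_nhds hmass
      (fun _ ↦ zero_le) (fun i ↦ (μs i).apply_le_mass E)
  · simp_rw [FiniteMeasure.self_eq_mass_mul_normalize _ E]
    refine μs_lim.mass.mul
      (ProbabilityMeasure.tendsto_measure_of_null_frontier_of_tendsto
        (FiniteMeasure.tendsto_normalize_of_tendsto μs_lim hμ) ?_)
    rw [μ.normalize_eq_of_nonzero hμ, E_nullbdry, mul_zero]

theorem Measure.prod_setOf_dist_sq_add_dist_sq_eq_eq_zero {X Y : Type*} [PseudoMetricSpace X]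
    [PseudoMetricSpace Y] [MeasurableSpace X] [MeasurableSpace Y] [OpensMeasurableSpace (X × Y)]
    (μ : Measure X) (ν : Measure Y) (hν : ∀ y r, ν (sphere y r) = 0)
    (x : X) (y : Y) (r : ℝ) :
    μ.prod ν {p | dist p.1 x ^ 2 + dist p.2 y ^ 2 = r} = 0 := by
  refine Measure.measure_prod_null_of_ae_null ?_ (.of_forall fun a ↦ ?_)
  · exact (isClosed_eq (by fun_prop) continuous_const).measurableSet
  · refine measure_mono_null (fun b hb ↦ ?_) (hν y √(r - dist a x ^ 2))
    rw [mem_sphere, ← hb.out, add_sub_cancel_left, Real.sqrt_sq dist_nonneg]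

section MetricSpace

variable {X : Type*} [PseudoMetricSpace X] [MeasurableSpace X] [OpensMeasurableSpace (X × X)]

theorem measurable_measure_ball (ν : Measure X) [SFinite ν] (ρ : ℝ) :
    Measurable fun z ↦ ν (ball z ρ) :=
  measurable_measure_prodMk_left
    (isOpen_lt (continuous_snd.dist continuous_fst) continuous_const).measurableSet

theorem ae_measure_sphere_eq_zero (m ν : Measure X) [SFinite m] [SFinite ν] {ρ : ℝ}
    (hm : ∀ z, m (sphere z ρ) = 0) : ∀ᵐ z ∂m, ν (sphere z ρ) = 0 := by
  have hS : MeasurableSet {p : X × X | dist p.1 p.2 = ρ} :=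
    (isClosed_eq (by fun_prop) continuous_const).measurableSet
  have hprod : m.prod ν {p : X × X | dist p.1 p.2 = ρ} = 0 := by
    rw [Measure.prod_apply_symm hS]
    exact (lintegral_congr hm).trans lintegral_zero
  filter_upwards [Measure.measure_ae_null_of_prod_null hprod] with z hz
  simpa [sphere, dist_comm] using hz

end MetricSpace

end MeasureTheory

namespace T2

noncomputable def equivProd : T2 ≃L[ℤ] AddCircle (1 : ℝ) × AddCircle (1 : ℝ) :=
  (PiLp.continuousLinearEquiv 2 ℤ _).trans (ContinuousLinearEquiv.finTwoArrow ℤ _)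

theorem dist_sq_eq (z w : T2) : dist z w ^ 2 = dist (z 0) (w 0) ^ 2 + dist (z 1) (w 1) ^ 2 := by
  rw [PiLp.dist_sq_eq_of_L2, Fin.sum_univ_two]

theorem measure_sphere_eq_zero (μ : Measure T2) [μ.IsAddHaarMeasure] (z : T2) (ρ : ℝ) :
    μ (sphere z ρ) = 0 := by
  let μ₀ : Measure T2 := (volume.prod volume).map equivProd.symm
  have : μ₀.IsAddHaarMeasure := equivProd.symm.isAddHaarMeasure_map _
  refine Measure.absolutelyContinuous_isAddHaarMeasure μ μ₀ ?_
  rw [Measure.map_apply equivProd.symm.continuous.measurable isClosed_sphere.measurableSet]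
  refine measure_mono_null (fun p hp ↦ ?_) (Measure.prod_setOf_dist_sq_add_dist_sq_eq_eq_zero _ _
    AddCircle.volume_sphere (z 0) (z 1) (ρ ^ 2))
  rw [← mem_sphere.1 hp, dist_sq_eq]
  rfl

end T2

theorem DensityBounds.absolutelyContinuous {C₀ : ℝ} {Leb m : Measure T2}
    (hm : DensityBounds C₀ Leb m) : m ≪ Leb :=
  .mk fun s hs hs₀ ↦ by simpa [hs₀] using (hm s hs).2

theorem tendsto_rinner_of_tendsto {m : Measure T2} [IsFiniteMeasure m] {ρ : ℝ}
    (hm : ∀ z, m (sphere z ρ) = 0) {ι : Type*} {L : Filter ι} [L.IsCountablyGenerated]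
    {μ μ' : FiniteMeasure T2} {μs μs' : ι → FiniteMeasure T2}
    (hμ : Tendsto μs L (𝓝 μ)) (hμ' : Tendsto μs' L (𝓝 μ')) :
    Tendsto (fun i ↦ rinner m (μs i) (μs' i) ρ) L (𝓝 (rinner m μ μ' ρ)) := by
  have hball {ν : FiniteMeasure T2} {νs : ι → FiniteMeasure T2}
      (hν : Tendsto νs L (𝓝 ν)) :
      ∀ᵐ z ∂m, Tendsto (fun i ↦ (νs i (ball z ρ) : ℝ)) L (𝓝 (ν (ball z ρ))) := by
    filter_upwards [ae_measure_sphere_eq_zero m ν hm] with z hz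
    refine NNReal.tendsto_coe.2 (FiniteMeasure.tendsto_measure_of_null_frontier_of_tendsto hν ?_)
    exact ENNReal.toNNReal_eq_zero_iff _ |>.2 <| .inl <|
      measure_mono_null frontier_ball_subset_sphere hz
  have hbound {ν : FiniteMeasure T2} {νs : ι → FiniteMeasure T2}
      (hν : Tendsto νs L (𝓝 ν)) :
      ∀ᶠ i in L, ∀ z, (νs i (ball z ρ) : ℝ) ≤ ν.mass + 1 := by
    filter_upwards [hν.mass.eventually_lt_const (lt_add_one ν.mass)] with i hi z
    exact_mod_cast ((νs i).apply_le_mass _).trans hi.le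
  refine (tendsto_integral_filter_of_dominated_convergence
    (fun _ ↦ (μ.mass + 1) * (μ'.mass + 1 : ℝ)) ?_ ?_ (integrable_const _) ?_).const_mul _
  · exact .of_forall fun i ↦ (((measurable_measure_ball _ ρ).ennreal_toReal).mul
      ((measurable_measure_ball _ ρ).ennreal_toReal)).aestronglyMeasurable
  · filter_upwards [hbound hμ, hbound hμ'] with i hi hi'
    refine .of_forall fun z ↦ ?_
    rw [Real.norm_of_nonneg (by positivity)]
    exact mul_le_mul (hi z) (hi' z) (by positivity) (by positivity)
  · filter_upwards [hball hμ, hball hμ'] with z hz hz'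
    exact hz.mul hz'

theorem rnorm_of_weak_limit
    (C₀ : ℝ) (Leb m : Measure T2)
    [Leb.IsAddHaarMeasure]
    [IsProbabilityMeasure m] (hm : DensityBounds C₀ Leb m)
    (ν : ℕ → Measure T2) (hν : ∀ k, IsFiniteMeasure (ν k))
    (ν' : Measure T2) [IsFiniteMeasure ν']
    (hconv : ∀ φ : T2 → ℝ, Continuous φ →
      Tendsto (fun k => ∫ x, φ x ∂(ν k)) atTop (𝓝 (∫ x, φ x ∂ν'))) :
    ∀ ρ : ℝ, 0 < ρ → Tendsto (fun k => rnorm m (ν k) ρ) atTop (𝓝 (rnorm m ν' ρ)) := by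
  intro ρ _
  let μs : ℕ → FiniteMeasure T2 := fun k ↦ ⟨ν k, hν k⟩
  let μ : FiniteMeasure T2 := ⟨ν', ‹_›⟩
  have hweak : Tendsto μs atTop (𝓝 μ) :=
    FiniteMeasure.tendsto_iff_forall_integral_tendsto.2 fun φ ↦ hconv φ φ.continuous
  have hsphere (z : T2) : m (sphere z ρ) = 0 :=
    hm.absolutelyContinuous (T2.measure_sphere_eq_zero Leb z ρ)
  exact (tendsto_rinner_of_tendsto hsphere hweak hweak).sqrt
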